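/- arXiv:1510.01534 — 5 statements merged into one kernel-verified Lean document; each statement's English description precedes it below -/
import Mathlib

section
/- Let T, S : H₁ → H₂ be bounded linear operators with T injective and R(T) closed, and suppose R(S) ⊆ R(T) and ‖T† S‖ < 1. Then (1) T + S is injective; (2) R(T + S) = R(T); (3) the Moore–Penrose inverse of T + S satisfies (T + S)† = (I + T†S)⁻¹ T† = T† (I + S T†)⁻¹; (4) ‖(T + S)†‖ ≤ ‖T†‖ / (1 − ‖T†S‖); and (5) ‖(T + S)† − T†‖ ≤ ‖T†S‖ ‖T†‖ / (1 − ‖T†S‖). -/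
/-!
Because `R(S) ⊆ R(T)` and `T T†` is the identity on `R(T)`, we have `T + S = T (I + T†S)`, and
`I + T†S` is invertible by the Neumann series, with `‖(I + T†S)⁻¹‖ ≤ 1 / (1 - ‖T†S‖)`.
Composing an injective operator `T` on the right with an invertible `V` keeps it injective,
does not change its range, and turns `T†` into `V⁻¹ T†`. The second formula for `(T + S)†` is
the push-through identity `(I + T†S)⁻¹ T† = T† (I + ST†)⁻¹`, and the estimate for
`(T + S)† - T†` comes from `(I + T†S)⁻¹ - I = -T†S (I + T†S)⁻¹`.
-/

/-- `Td` is the Moore–Penrose inverse of the bounded operator `T` with closed range: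
`T T† = P_{R(T)}`, `T† T = P_{N(T)^⊥}` and `N(T†) = R(T)^⊥` (the projection identities
are expressed via the characteristic orthogonality properties of orthogonal
projections onto closed subspaces). -/
structure IsMPBOf {H₁ H₂ : Type*} [NormedAddCommGroup H₁] [InnerProductSpace ℂ H₁]
    [NormedAddCommGroup H₂] [InnerProductSpace ℂ H₂]
    (T : H₁ →L[ℂ] H₂) (Td : H₂ →L[ℂ] H₁) : Prop where
  mem_carrier : ∀ y : H₂, Td y ∈ (LinearMap.ker (T : H₁ →ₗ[ℂ] H₂))ᗮ
  proj_ran : ∀ y : H₂, y - T (Td y) ∈ (LinearMap.range (T : H₁ →ₗ[ℂ] H₂))ᗮ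
  proj_ker : ∀ x : H₁, x - Td (T x) ∈ LinearMap.ker (T : H₁ →ₗ[ℂ] H₂)
  ker_eq : ∀ y : H₂, Td y = 0 ↔ y ∈ (LinearMap.range (T : H₁ →ₗ[ℂ] H₂))ᗮ

theorem Units.norm_inv_oneSub_le {R : Type*} [NormedRing R] [HasSummableGeomSeries R]
    (t : R) (ht : ‖t‖ < 1) (h1 : ‖(1 : R)‖ ≤ 1) :
    ‖(↑(Units.oneSub t ht)⁻¹ : R)‖ ≤ (1 - ‖t‖)⁻¹ := by
  have := tsum_geometric_le_of_norm_lt_one t ht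
  change ‖∑' n : ℕ, t ^ n‖ ≤ _
  linarith

namespace ContinuousLinearMap

variable {𝕜 E F : Type*} [NontriviallyNormedField 𝕜] [NormedAddCommGroup E] [NormedSpace 𝕜 E]
  [NormedAddCommGroup F] [NormedSpace 𝕜 F]

theorem range_comp_units (T : E →L[𝕜] F) (u : (E →L[𝕜] E)ˣ) :
    LinearMap.range ((T.comp (u : E →L[𝕜] E) : E →L[𝕜] F) : E →ₗ[𝕜] F) =
      LinearMap.range (T : E →ₗ[𝕜] F) :=
  LinearMap.range_comp_of_range_eq_top _ <| LinearMap.range_eq_top.mpr fun x =>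
    ⟨_, (homeomorphOfUnit u).apply_symm_apply x⟩

theorem norm_comp_sub_le_of_one_add_mul_eq_one {x V : E →L[𝕜] E} (hV : (1 + x) * V = 1)
    (A : F →L[𝕜] E) : ‖V.comp A - A‖ ≤ ‖x‖ * ‖V.comp A‖ := by
  have hV' : V - 1 = -(x * V) := by
    rw [← hV]
    noncomm_ring
  have : V.comp A - A = -(x.comp (V.comp A)) :=
    calc V.comp A - A = (V - 1).comp A := by rw [sub_comp]; rfl
      _ = -(x.comp (V.comp A)) := by rw [hV', neg_comp, mul_def]; rfl
  rw [this, norm_neg]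
  exact opNorm_comp_le x _

/-- If `V` inverts `1 + B A`, then `1 - A V B` inverts `1 + A B`. -/
theorem exists_inverse_one_add_comp_swap (A : E →L[𝕜] F) (B : F →L[𝕜] E) (V : E →L[𝕜] E)
    (hl : V.comp (1 + B.comp A) = 1) (hr : (1 + B.comp A).comp V = 1) :
    ∃ W : F →L[𝕜] F, W.comp (1 + A.comp B) = 1 ∧ (1 + A.comp B).comp W = 1 ∧
      B.comp W = V.comp B := by
  have hl' (x : E) : V x + V (B (A x)) = x := by simpa using congrArg (· x) hl
  have hr' (x : E) : V x + B (A (V x)) = x := by simpa using congrArg (· x) hr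
  refine ⟨1 - A.comp (V.comp B), ?_, ?_, ?_⟩ <;> ext y
  · have := congrArg A (hl' (B y))
    simp only [map_add] at this
    simp only [comp_apply, sub_apply, add_apply, one_apply_eq_self, map_add]
    rw [eq_sub_of_add_eq this]
    abel
  · have := congrArg A (hr' (B y))
    simp only [map_add] at this
    simp only [comp_apply, sub_apply, add_apply, one_apply_eq_self, map_sub]
    rw [eq_sub_of_add_eq' this]
    abel
  · simp only [comp_apply, sub_apply, one_apply_eq_self, map_sub]
    rw [eq_sub_of_add_eq' (hr' (B y))]
    abel

end ContinuousLinearMap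

namespace IsMPBOf

variable {H₁ H₂ : Type*} [NormedAddCommGroup H₁] [InnerProductSpace ℂ H₁]
  [NormedAddCommGroup H₂] [InnerProductSpace ℂ H₂] {T : H₁ →L[ℂ] H₂} {Td : H₂ →L[ℂ] H₁}

theorem apply_apply_of_mem_range (h : IsMPBOf T Td) {y : H₂}
    (hy : y ∈ LinearMap.range (T : H₁ →ₗ[ℂ] H₂)) : T (Td y) = y := by
  have hmem : y - T (Td y) ∈ LinearMap.range (T : H₁ →ₗ[ℂ] H₂) :=
    Submodule.sub_mem _ hy ⟨Td y, rfl⟩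
  have := (Submodule.mem_orthogonal _ _).mp (h.proj_ran y) _ hmem
  rw [inner_self_eq_zero, sub_eq_zero] at this
  exact this.symm

theorem comp_comp_of_range_le (h : IsMPBOf T Td) {S : H₁ →L[ℂ] H₂}
    (hS : LinearMap.range (S : H₁ →ₗ[ℂ] H₂) ≤ LinearMap.range (T : H₁ →ₗ[ℂ] H₂)) :
    T.comp (Td.comp S) = S :=
  ContinuousLinearMap.ext fun x => h.apply_apply_of_mem_range (hS ⟨x, rfl⟩)

theorem apply_apply_of_injective (h : IsMPBOf T Td) (hT : Function.Injective T) (x : H₁) :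
    Td (T x) = x :=
  (sub_eq_zero.mp (hT (by simpa using h.proj_ker x))).symm

theorem comp_units_of_injective (h : IsMPBOf T Td) (hT : Function.Injective T)
    (u : (H₁ →L[ℂ] H₁)ˣ) : IsMPBOf (T.comp (u : H₁ →L[ℂ] H₁)) ((↑u⁻¹ : H₁ →L[ℂ] H₁).comp Td) := by
  have hinv (x : H₁) : (↑u : H₁ →L[ℂ] H₁) ((↑u⁻¹ : H₁ →L[ℂ] H₁) x) = x := by
    rw [← mul_apply_eq_comp, u.mul_inv, one_apply_eq_self]
  have hinv' (x : H₁) : (↑u⁻¹ : H₁ →L[ℂ] H₁) ((↑u : H₁ →L[ℂ] H₁) x) = x := by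
    rw [← mul_apply_eq_comp, u.inv_mul, one_apply_eq_self]
  have hker : LinearMap.ker ((T.comp (u : H₁ →L[ℂ] H₁) : H₁ →L[ℂ] H₂) : H₁ →ₗ[ℂ] H₂) = ⊥ :=
    LinearMap.ker_eq_bot.mpr (hT.comp (Function.LeftInverse.injective hinv'))
  refine ⟨fun y => ?_, fun y => ?_, fun x => ?_, fun y => ?_⟩
  · rw [hker, Submodule.bot_orthogonal_eq_top]
    trivial
  · rw [ContinuousLinearMap.range_comp_units, ContinuousLinearMap.comp_apply,
      ContinuousLinearMap.comp_apply, hinv]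
    exact h.proj_ran y
  · simp [h.apply_apply_of_injective hT, hinv']
  · rw [ContinuousLinearMap.range_comp_units, ← h.ker_eq, ContinuousLinearMap.comp_apply,
      (Function.LeftInverse.injective hinv).eq_iff' (map_zero _)]

end IsMPBOf

theorem stmt8_general {H₁ H₂ : Type*} [NormedAddCommGroup H₁] [InnerProductSpace ℂ H₁] [CompleteSpace H₁]
    [NormedAddCommGroup H₂] [InnerProductSpace ℂ H₂]
    (T S : H₁ →L[ℂ] H₂) (hinj : Function.Injective T)
    (Td : H₂ →L[ℂ] H₁) (hMP : IsMPBOf T Td)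
    (hRS : LinearMap.range (S : H₁ →ₗ[ℂ] H₂) ≤ LinearMap.range (T : H₁ →ₗ[ℂ] H₂))
    (hnorm : ‖Td.comp S‖ < 1) :
    Function.Injective (T + S) ∧
      LinearMap.range ((T + S : H₁ →L[ℂ] H₂) : H₁ →ₗ[ℂ] H₂) = LinearMap.range (T : H₁ →ₗ[ℂ] H₂) ∧
      ∃ U : H₂ →L[ℂ] H₁, IsMPBOf (T + S) U ∧
        (∃ V : H₁ →L[ℂ] H₁, V.comp (1 + Td.comp S) = 1 ∧ (1 + Td.comp S).comp V = 1 ∧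
          U = V.comp Td) ∧
        (∃ W : H₂ →L[ℂ] H₂, W.comp (1 + S.comp Td) = 1 ∧ (1 + S.comp Td).comp W = 1 ∧
          U = Td.comp W) ∧
        ‖U‖ ≤ ‖Td‖ / (1 - ‖Td.comp S‖) ∧
        ‖U - Td‖ ≤ ‖Td.comp S‖ * ‖Td‖ / (1 - ‖Td.comp S‖) := by
  have hTdS : ‖-(Td.comp S)‖ < 1 := by rwa [norm_neg]
  set u := Units.oneSub _ hTdS
  have hu : (u : H₁ →L[ℂ] H₁) = 1 + Td.comp S := by simp [u]
  set V : H₁ →L[ℂ] H₁ := ↑u⁻¹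
  have hV : ‖V‖ ≤ (1 - ‖Td.comp S‖)⁻¹ := by
    simpa only [norm_neg] using Units.norm_inv_oneSub_le _ hTdS ContinuousLinearMap.norm_id_le
  have hfactor : T + S = T.comp (u : H₁ →L[ℂ] H₁) := by
    rw [hu, ContinuousLinearMap.comp_add, hMP.comp_comp_of_range_le hRS]
    rfl
  obtain ⟨W, hW, hW', hTdW⟩ :=
    ContinuousLinearMap.exists_inverse_one_add_comp_swap S Td V (hu ▸ u.inv_mul) (hu ▸ u.mul_inv)
  have hUbound : ‖V.comp Td‖ ≤ ‖Td‖ / (1 - ‖Td.comp S‖) :=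
    calc ‖V.comp Td‖ ≤ ‖V‖ * ‖Td‖ := V.opNorm_comp_le Td
      _ ≤ (1 - ‖Td.comp S‖)⁻¹ * ‖Td‖ := by gcongr
      _ = ‖Td‖ / (1 - ‖Td.comp S‖) := inv_mul_eq_div _ _
  rw [hfactor]
  refine ⟨hinj.comp ?_, ContinuousLinearMap.range_comp_units T u, V.comp Td,
    hMP.comp_units_of_injective hinj u, ⟨V, hu ▸ u.inv_mul, hu ▸ u.mul_inv, rfl⟩,
    ⟨W, hW, hW', hTdW.symm⟩, hUbound, ?_⟩
  · exact (ContinuousLinearMap.homeomorphOfUnit u).injective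
  · calc ‖V.comp Td - Td‖ ≤ ‖Td.comp S‖ * ‖V.comp Td‖ :=
          ContinuousLinearMap.norm_comp_sub_le_of_one_add_mul_eq_one (hu ▸ u.mul_inv) Td
      _ ≤ ‖Td.comp S‖ * (‖Td‖ / (1 - ‖Td.comp S‖)) := by gcongr
      _ = ‖Td.comp S‖ * ‖Td‖ / (1 - ‖Td.comp S‖) := by ring

/-- Corollary 3.10 (Ding–Huang, Lemma 3.3): if `T` is bounded, injective with closed
range, `R(S) ⊆ R(T)` and `‖T† S‖ < 1`, then `T + S` is injective, `R(T + S) = R(T)`,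
`(T + S)† = (I + T† S)⁻¹ T† = T† (I + S T†)⁻¹`, `‖(T + S)†‖ ≤ ‖T†‖/(1 − ‖T† S‖)` and
`‖(T + S)† − T†‖ ≤ ‖T† S‖ ‖T†‖/(1 − ‖T† S‖)`. -/
theorem stmt8 {H₁ H₂ : Type*} [NormedAddCommGroup H₁] [InnerProductSpace ℂ H₁] [CompleteSpace H₁]
    [NormedAddCommGroup H₂] [InnerProductSpace ℂ H₂] [CompleteSpace H₂]
    (T S : H₁ →L[ℂ] H₂) (hinj : Function.Injective T)
    (hran : IsClosed (LinearMap.range (T : H₁ →ₗ[ℂ] H₂) : Set H₂))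
    (Td : H₂ →L[ℂ] H₁) (hMP : IsMPBOf T Td)
    (hRS : LinearMap.range (S : H₁ →ₗ[ℂ] H₂) ≤ LinearMap.range (T : H₁ →ₗ[ℂ] H₂))
    (hnorm : ‖Td.comp S‖ < 1) :
    Function.Injective (T + S) ∧
      LinearMap.range ((T + S : H₁ →L[ℂ] H₂) : H₁ →ₗ[ℂ] H₂) = LinearMap.range (T : H₁ →ₗ[ℂ] H₂) ∧
      ∃ U : H₂ →L[ℂ] H₁, IsMPBOf (T + S) U ∧
        (∃ V : H₁ →L[ℂ] H₁, V.comp (1 + Td.comp S) = 1 ∧ (1 + Td.comp S).comp V = 1 ∧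
          U = V.comp Td) ∧
        (∃ W : H₂ →L[ℂ] H₂, W.comp (1 + S.comp Td) = 1 ∧ (1 + S.comp Td).comp W = 1 ∧
          U = Td.comp W) ∧
        ‖U‖ ≤ ‖Td‖ / (1 - ‖Td.comp S‖) ∧
        ‖U - Td‖ ≤ ‖Td.comp S‖ * ‖Td‖ / (1 - ‖Td.comp S‖) :=
  stmt8_general T S hinj Td hMP hRS hnorm
end

section
/- Let T, S : H₁ → H₂ be bounded linear operators with T surjective, and suppose N(T) ⊆ N(S) and ‖S T†‖ < 1. Then (1) T + S is surjective; (2) N(T + S) = N(T); (3) the Moore–Penrose inverse of T + S satisfies (T + S)† = T† (I + S T†)⁻¹ = (I + T†S)⁻¹ T†; (4) ‖(T + S)†‖ ≤ ‖T†‖ / (1 − ‖S T†‖); and (5) ‖(T + S)† − T†‖ ≤ ‖S T†‖ ‖T†‖ / (1 − ‖S T†‖). -/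
namespace Units

variable {R : Type*} [NormedRing R] [HasSummableGeomSeries R]

theorem norm_inv_oneSub_le_s9 (t : R) (ht : ‖t‖ < 1) (h1 : ‖(1 : R)‖ ≤ 1) :
    ‖(↑(oneSub t ht)⁻¹ : R)‖ ≤ (1 - ‖t‖)⁻¹ :=
  (tsum_geometric_le_of_norm_lt_one t ht).trans (by linarith)

theorem norm_inv_oneSub_sub_one_le (t : R) (ht : ‖t‖ < 1) (h1 : ‖(1 : R)‖ ≤ 1) :
    ‖(↑(oneSub t ht)⁻¹ : R) - 1‖ ≤ (1 - ‖t‖)⁻¹ * ‖t‖ := by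
  set u := oneSub t ht
  have hsub : (↑u⁻¹ : R) - 1 = ↑u⁻¹ * t := by
    calc (↑u⁻¹ : R) - 1 = ↑u⁻¹ * (1 - ↑u) := by rw [mul_sub, mul_one, u.inv_mul]
      _ = ↑u⁻¹ * t := by rw [val_oneSub, sub_sub_cancel]
  rw [hsub]
  exact (norm_mul_le _ _).trans
    (mul_le_mul_of_nonneg_right (norm_inv_oneSub_le_s9 t ht h1) (norm_nonneg t))

end Units

theorem ContinuousLinearMap.ker_units_comp {R : Type*} [Ring R] {E F : Type*} [TopologicalSpace E]
    [AddCommGroup E] [Module R E] [TopologicalSpace F] [AddCommGroup F] [Module R F]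
    (u : (F →L[R] F)ˣ) (T : E →L[R] F) :
    LinearMap.ker ((u.val.comp T : E →L[R] F) : E →ₗ[R] F) = LinearMap.ker (T : E →ₗ[R] F) :=
  LinearEquiv.ker_comp (ContinuousLinearEquiv.unitsEquiv R F u).toLinearEquiv (T : E →ₗ[R] F)

namespace ContinuousLinearMap

variable {R : Type*} [Ring R] {E F : Type*} [TopologicalSpace E] [AddCommGroup E] [Module R E]
  [IsTopologicalAddGroup E] [TopologicalSpace F] [AddCommGroup F] [Module R F]
  [IsTopologicalAddGroup F]

/-- Jacobson's lemma, together with the intertwining `g (1 + f g)⁻¹ = (1 + g f)⁻¹ g`. -/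
theorem inverse_one_add_comp_swap {f : E →L[R] F} {g : F →L[R] E} {w : F →L[R] F}
    (hw : w.comp (1 + f.comp g) = 1) (hw' : (1 + f.comp g).comp w = 1) :
    (1 - g.comp (w.comp f)).comp (1 + g.comp f) = 1 ∧
      (1 + g.comp f).comp (1 - g.comp (w.comp f)) = 1 ∧
      g.comp w = (1 - g.comp (w.comp f)).comp g := by
  have hw_apply (y : F) : g (w y) = g y - g (w (f (g y))) := by
    rw [eq_sub_iff_add_eq, ← map_add]
    simpa using congr(g ($hw y))
  have hw'_apply (y : F) : g (f (g (w y))) = g y - g (w y) := by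
    rw [eq_sub_iff_add_eq', ← map_add]
    simpa using congr(g ($hw' y))
  refine ⟨?_, ?_, ?_⟩ <;> ext x <;>
    simp only [comp_add, comp_sub, add_comp, sub_comp, add_apply, sub_apply, comp_apply,
      one_apply_eq_self]
  · rw [hw_apply (f x)]; abel
  · rw [hw'_apply (f x)]; abel
  · exact hw_apply x

end ContinuousLinearMap

namespace IsMPBOf

variable {H₁ H₂ : Type*} [NormedAddCommGroup H₁] [InnerProductSpace ℂ H₁]
  [NormedAddCommGroup H₂] [InnerProductSpace ℂ H₂] {T : H₁ →L[ℂ] H₂} {Td : H₂ →L[ℂ] H₁}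

theorem of_comp_eq_one {U : H₂ →L[ℂ] H₁} (hU : T.comp U = 1)
    (hU_mem : ∀ y, U y ∈ (LinearMap.ker (T : H₁ →ₗ[ℂ] H₂))ᗮ) : IsMPBOf T U := by
  have hTU (y : H₂) : T (U y) = y := congr($hU y)
  have hrange : LinearMap.range (T : H₁ →ₗ[ℂ] H₂) = ⊤ :=
    LinearMap.range_eq_top.mpr fun y => ⟨U y, hTU y⟩
  refine ⟨hU_mem, fun y => by simp [hTU], fun x => by simp [hTU], fun y => ?_⟩
  rw [hrange, Submodule.top_orthogonal_eq_bot, Submodule.mem_bot]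
  exact ⟨fun hy => by rw [← hTU y, hy, map_zero], fun hy => by rw [hy, map_zero]⟩

theorem comp_eq_one (h : IsMPBOf T Td) (hT : Function.Surjective T) : T.comp Td = 1 := by
  ext y
  have hy := h.proj_ran y
  rwa [LinearMap.range_eq_top.mpr hT, Submodule.top_orthogonal_eq_bot, Submodule.mem_bot,
    sub_eq_zero, eq_comm] at hy

theorem comp_comp_eq_of_ker_le {F : Type*} [NormedAddCommGroup F] [NormedSpace ℂ F]
    (h : IsMPBOf T Td) {S : H₁ →L[ℂ] F}
    (hker : LinearMap.ker (T : H₁ →ₗ[ℂ] H₂) ≤ LinearMap.ker (S : H₁ →ₗ[ℂ] F)) :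
    (S.comp Td).comp T = S := by
  ext x
  have hx : S (x - Td (T x)) = 0 := hker (h.proj_ker x)
  rw [map_sub, sub_eq_zero] at hx
  exact hx.symm

theorem units_comp (h : IsMPBOf T Td) (hT : Function.Surjective T) (u : (H₂ →L[ℂ] H₂)ˣ) :
    IsMPBOf (u.val.comp T) (Td.comp u⁻¹.val) := by
  refine of_comp_eq_one ?_ fun y => ?_
  · rw [ContinuousLinearMap.comp_assoc, ← ContinuousLinearMap.comp_assoc T, h.comp_eq_one hT,
      ← ContinuousLinearMap.mul_def, ← ContinuousLinearMap.mul_def, one_mul, u.mul_inv]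
  · rw [ContinuousLinearMap.ker_units_comp]
    exact h.mem_carrier _

end IsMPBOf

theorem stmt9_general {H₁ H₂ : Type*} [NormedAddCommGroup H₁] [InnerProductSpace ℂ H₁]
    [NormedAddCommGroup H₂] [InnerProductSpace ℂ H₂] [CompleteSpace H₂]
    (T S : H₁ →L[ℂ] H₂) (hsurj : Function.Surjective T)
    (Td : H₂ →L[ℂ] H₁) (hMP : IsMPBOf T Td)
    (hker : LinearMap.ker (T : H₁ →ₗ[ℂ] H₂) ≤ LinearMap.ker (S : H₁ →ₗ[ℂ] H₂))
    (hnorm : ‖S.comp Td‖ < 1) :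
    Function.Surjective (T + S) ∧
      LinearMap.ker ((T + S : H₁ →L[ℂ] H₂) : H₁ →ₗ[ℂ] H₂) = LinearMap.ker (T : H₁ →ₗ[ℂ] H₂) ∧
      ∃ U : H₂ →L[ℂ] H₁, IsMPBOf (T + S) U ∧
        (∃ W : H₂ →L[ℂ] H₂, W.comp (1 + S.comp Td) = 1 ∧ (1 + S.comp Td).comp W = 1 ∧
          U = Td.comp W) ∧
        (∃ V : H₁ →L[ℂ] H₁, V.comp (1 + Td.comp S) = 1 ∧ (1 + Td.comp S).comp V = 1 ∧
          U = V.comp Td) ∧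
        ‖U‖ ≤ ‖Td‖ / (1 - ‖S.comp Td‖) ∧
        ‖U - Td‖ ≤ ‖S.comp Td‖ * ‖Td‖ / (1 - ‖S.comp Td‖) := by
  set A := S.comp Td
  have hA : ‖-A‖ < 1 := by rwa [norm_neg]
  set u := Units.oneSub (-A) hA
  have hu : u.val = 1 + A := sub_neg_eq_add 1 A
  set W := u⁻¹.val
  have hTS : T + S = u.val.comp T := by
    rw [hu, ContinuousLinearMap.add_comp, hMP.comp_comp_eq_of_ker_le hker,
      ContinuousLinearMap.one_def, ContinuousLinearMap.id_comp]
  have hW : W.comp (1 + A) = 1 ∧ (1 + A).comp W = 1 := by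
    rw [← hu]; exact ⟨u.inv_mul, u.mul_inv⟩
  obtain ⟨hV, hV', hWV⟩ := ContinuousLinearMap.inverse_one_add_comp_swap hW.1 hW.2
  have hW_norm : ‖W‖ ≤ (1 - ‖A‖)⁻¹ := by
    simpa using Units.norm_inv_oneSub_le_s9 (-A) hA ContinuousLinearMap.norm_id_le
  have hW_sub_norm : ‖W - 1‖ ≤ (1 - ‖A‖)⁻¹ * ‖A‖ := by
    simpa using Units.norm_inv_oneSub_sub_one_le (-A) hA ContinuousLinearMap.norm_id_le
  refine ⟨hTS ▸ (ContinuousLinearEquiv.unitsEquiv ℂ H₂ u).surjective.comp hsurj,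
    hTS ▸ ContinuousLinearMap.ker_units_comp u T, Td.comp W, hTS ▸ hMP.units_comp hsurj u,
    ⟨W, hW.1, hW.2, rfl⟩, ⟨_, hV, hV', hWV⟩, ?_, ?_⟩
  · calc ‖Td.comp W‖ ≤ ‖Td‖ * ‖W‖ := Td.opNorm_comp_le W
      _ ≤ ‖Td‖ * (1 - ‖A‖)⁻¹ := by gcongr
      _ = ‖Td‖ / (1 - ‖A‖) := div_eq_mul_inv _ _ |>.symm
  · calc ‖Td.comp W - Td‖ = ‖Td.comp (W - 1)‖ := by rw [Td.comp_sub]; rfl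
      _ ≤ ‖Td‖ * ‖W - 1‖ := Td.opNorm_comp_le _
      _ ≤ ‖Td‖ * ((1 - ‖A‖)⁻¹ * ‖A‖) := by gcongr
      _ = ‖A‖ * ‖Td‖ / (1 - ‖A‖) := by ring

/-- Corollary 3.11 (Ding–Huang, Lemma 3.4): if `T` is bounded and surjective,
`N(T) ⊆ N(S)` and `‖S T†‖ < 1`, then `T + S` is surjective, `N(T + S) = N(T)`,
`(T + S)† = T† (I + S T†)⁻¹ = (I + T† S)⁻¹ T†`, `‖(T + S)†‖ ≤ ‖T†‖/(1 − ‖S T†‖)` and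
`‖(T + S)† − T†‖ ≤ ‖S T†‖ ‖T†‖/(1 − ‖S T†‖)`. -/
theorem stmt9 {H₁ H₂ : Type*} [NormedAddCommGroup H₁] [InnerProductSpace ℂ H₁] [CompleteSpace H₁]
    [NormedAddCommGroup H₂] [InnerProductSpace ℂ H₂] [CompleteSpace H₂]
    (T S : H₁ →L[ℂ] H₂) (hsurj : Function.Surjective T)
    (Td : H₂ →L[ℂ] H₁) (hMP : IsMPBOf T Td)
    (hker : LinearMap.ker (T : H₁ →ₗ[ℂ] H₂) ≤ LinearMap.ker (S : H₁ →ₗ[ℂ] H₂))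
    (hnorm : ‖S.comp Td‖ < 1) :
    Function.Surjective (T + S) ∧
      LinearMap.ker ((T + S : H₁ →L[ℂ] H₂) : H₁ →ₗ[ℂ] H₂) = LinearMap.ker (T : H₁ →ₗ[ℂ] H₂) ∧
      ∃ U : H₂ →L[ℂ] H₁, IsMPBOf (T + S) U ∧
        (∃ W : H₂ →L[ℂ] H₂, W.comp (1 + S.comp Td) = 1 ∧ (1 + S.comp Td).comp W = 1 ∧
          U = Td.comp W) ∧
        (∃ V : H₁ →L[ℂ] H₁, V.comp (1 + Td.comp S) = 1 ∧ (1 + Td.comp S).comp V = 1 ∧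
          U = V.comp Td) ∧
        ‖U‖ ≤ ‖Td‖ / (1 - ‖S.comp Td‖) ∧
        ‖U - Td‖ ≤ ‖S.comp Td‖ * ‖Td‖ / (1 - ‖S.comp Td‖) :=
  stmt9_general T S hsurj Td hMP hker hnorm
end

section
/- Let T, S : H₁ → H₂ be bounded linear operators with R(T) closed, and suppose N(T) ⊆ N(S) and ‖S‖ ‖T†‖ < 1. Then (i) N(T + S) = N(T), and (ii) R(T + S) is closed and ‖(T + S)†‖ ≤ ‖T†‖ / (1 − ‖S‖ ‖T†‖). -/
/-! On `N(T)^⊥` we have `m = T† T m`, hence `‖m‖ ≤ ‖T†‖ (‖(T + S) m‖ + ‖S‖ ‖m‖)`: the operator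
`T + S` is bounded below by `(1 - ‖S‖ ‖T†‖) / ‖T†‖` on `N(T)^⊥`. Together with `N(T) ⊆ N(S)` this
forces `N(T + S) = N(T)`. An operator bounded below on the orthogonal complement of its kernel
has closed range, and since `(T + S)(T + S)†` is an orthogonal projection, the lower bound
`c` gives `‖(T + S)†‖ ≤ 1 / c`. -/

open Submodule

section InnerProductSpace

variable {𝕜 H₁ H₂ : Type*} [RCLike 𝕜] [NormedAddCommGroup H₁] [InnerProductSpace 𝕜 H₁]
  [CompleteSpace H₁] [NormedAddCommGroup H₂] [InnerProductSpace 𝕜 H₂]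

theorem ContinuousLinearMap.exists_mem_orthogonal_ker_apply_eq (A : H₁ →L[𝕜] H₂) (x : H₁) :
    ∃ m ∈ (LinearMap.ker (A : H₁ →ₗ[𝕜] H₂))ᗮ, A m = A x := by
  set K := LinearMap.ker (A : H₁ →ₗ[𝕜] H₂)
  refine ⟨x - K.starProjection x, K.sub_starProjection_mem_orthogonal x, ?_⟩
  have hK : A (K.starProjection x) = 0 := K.starProjection_apply_mem x
  rw [map_sub, hK, sub_zero]

theorem ContinuousLinearMap.isClosed_range_of_norm_le (A : H₁ →L[𝕜] H₂) (C : ℝ)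
    (hA : ∀ m ∈ (LinearMap.ker (A : H₁ →ₗ[𝕜] H₂))ᗮ, ‖m‖ ≤ C * ‖A m‖) :
    IsClosed (LinearMap.range (A : H₁ →ₗ[𝕜] H₂) : Set H₂) := by
  set K := LinearMap.ker (A : H₁ →ₗ[𝕜] H₂)
  have hanti : AntilipschitzWith C.toNNReal (A ∘L Kᗮ.subtypeL) :=
    ContinuousLinearMap.antilipschitz_of_bound _ fun m =>
      (hA m m.2).trans (mul_le_mul_of_nonneg_right (Real.le_coe_toNNReal C) (norm_nonneg _))
  convert hanti.isClosed_range (A ∘L Kᗮ.subtypeL).uniformContinuous using 1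
  ext y
  constructor
  · rintro ⟨x, rfl⟩
    obtain ⟨m, hm, hAm⟩ := A.exists_mem_orthogonal_ker_apply_eq x
    exact ⟨⟨m, hm⟩, hAm⟩
  · rintro ⟨m, rfl⟩
    exact ⟨m, rfl⟩

end InnerProductSpace

section MoorePenrose

variable {H₁ H₂ : Type*} [NormedAddCommGroup H₁] [InnerProductSpace ℂ H₁]
  [NormedAddCommGroup H₂] [InnerProductSpace ℂ H₂] {A : H₁ →L[ℂ] H₂} {U : H₂ →L[ℂ] H₁}

theorem IsMPBOf.of_apply_eq_starProjection
    [(LinearMap.range (A : H₁ →ₗ[ℂ] H₂)).HasOrthogonalProjection]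
    (hU : ∀ y, U y ∈ (LinearMap.ker (A : H₁ →ₗ[ℂ] H₂))ᗮ)
    (hAU : ∀ y, A (U y) = (LinearMap.range (A : H₁ →ₗ[ℂ] H₂)).starProjection y) :
    IsMPBOf A U := by
  set K := LinearMap.ker (A : H₁ →ₗ[ℂ] H₂)
  refine ⟨hU, fun y => hAU y ▸ sub_starProjection_mem_orthogonal y, fun x => ?_, fun y => ?_⟩
  · have hx : A x ∈ LinearMap.range (A : H₁ →ₗ[ℂ] H₂) := ⟨x, rfl⟩
    show A (x - U (A x)) = 0
    rw [map_sub, hAU, starProjection_eq_self_iff.mpr hx, sub_self]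
  · rw [← starProjection_apply_eq_zero_iff, ← hAU]
    refine ⟨fun h => by rw [h, map_zero], fun h => ?_⟩
    exact (mem_bot ℂ).mp (K.orthogonal_disjoint.le_bot ⟨h, hU y⟩)

theorem exists_isMPBOf_of_isClosed_range [CompleteSpace H₁] [CompleteSpace H₂] (A : H₁ →L[ℂ] H₂)
    (hA : IsClosed (LinearMap.range (A : H₁ →ₗ[ℂ] H₂) : Set H₂)) : ∃ U, IsMPBOf A U := by
  set K := LinearMap.ker (A : H₁ →ₗ[ℂ] H₂)
  set R := LinearMap.range (A : H₁ →ₗ[ℂ] H₂)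
  have : CompleteSpace R := hA.completeSpace_coe
  let A' : Kᗮ →L[ℂ] R := (A ∘L Kᗮ.subtypeL).codRestrict R fun m => ⟨m, rfl⟩
  have hinj : LinearMap.ker (A' : Kᗮ →ₗ[ℂ] R) = ⊥ := by
    rw [LinearMap.ker_eq_bot']
    intro m hm
    have hmK : (m : H₁) ∈ K := congrArg Subtype.val hm
    exact Subtype.ext ((mem_bot ℂ).mp (K.orthogonal_disjoint.le_bot ⟨hmK, m.2⟩))
  have hsurj : LinearMap.range (A' : Kᗮ →ₗ[ℂ] R) = ⊤ := by
    rw [LinearMap.range_eq_top]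
    rintro ⟨_, x, rfl⟩
    obtain ⟨m, hm, hAm⟩ := A.exists_mem_orthogonal_ker_apply_eq x
    exact ⟨⟨m, hm⟩, Subtype.ext hAm⟩
  let e := ContinuousLinearEquiv.ofBijective A' hinj hsurj
  exact ⟨Kᗮ.subtypeL ∘L (e.symm : R →L[ℂ] Kᗮ) ∘L R.orthogonalProjectionOnto,
    .of_apply_eq_starProjection (fun _ => (e.symm _).2)
      fun _ => congrArg Subtype.val (e.apply_symm_apply _)⟩

namespace IsMPBOf

theorem norm_apply_apply_le (h : IsMPBOf A U) (y : H₂) : ‖A (U y)‖ ≤ ‖y‖ := by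
  have horth : inner ℂ (A (U y)) (y - A (U y)) = 0 := h.proj_ran y (A (U y)) ⟨U y, rfl⟩
  have hpyth := norm_add_sq_eq_norm_sq_add_norm_sq_of_inner_eq_zero _ _ horth
  rw [add_sub_cancel] at hpyth
  exact (mul_self_le_mul_self_iff (norm_nonneg _) (norm_nonneg _)).mpr
    (hpyth ▸ le_add_of_nonneg_right (mul_self_nonneg _))

theorem opNorm_le_of_norm_le (h : IsMPBOf A U) {C : ℝ} (hC : 0 ≤ C)
    (hA : ∀ m ∈ (LinearMap.ker (A : H₁ →ₗ[ℂ] H₂))ᗮ, ‖m‖ ≤ C * ‖A m‖) : ‖U‖ ≤ C :=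
  U.opNorm_le_bound hC fun y =>
    (hA _ (h.mem_carrier y)).trans (mul_le_mul_of_nonneg_left (h.norm_apply_apply_le y) hC)

theorem apply_apply_eq_self (h : IsMPBOf A U) {m : H₁}
    (hm : m ∈ (LinearMap.ker (A : H₁ →ₗ[ℂ] H₂))ᗮ) : U (A m) = m := by
  have hsub : m - U (A m) ∈ (LinearMap.ker (A : H₁ →ₗ[ℂ] H₂))ᗮ := sub_mem hm (h.mem_carrier _)
  exact (sub_eq_zero.mp ((mem_bot ℂ).mp
    ((orthogonal_disjoint _).le_bot ⟨h.proj_ker m, hsub⟩))).symm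

theorem one_sub_mul_norm_le (h : IsMPBOf A U) (S : H₁ →L[ℂ] H₂) {m : H₁}
    (hm : m ∈ (LinearMap.ker (A : H₁ →ₗ[ℂ] H₂))ᗮ) :
    (1 - ‖S‖ * ‖U‖) * ‖m‖ ≤ ‖U‖ * ‖(A + S) m‖ := by
  have hm' : ‖m‖ ≤ ‖U‖ * ‖A m‖ := calc
    ‖m‖ = ‖U (A m)‖ := by rw [h.apply_apply_eq_self hm]
    _ ≤ ‖U‖ * ‖A m‖ := U.le_opNorm (A m)
  have hAm : ‖A m‖ ≤ ‖(A + S) m‖ + ‖S‖ * ‖m‖ := calc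
    ‖A m‖ = ‖(A + S) m - S m‖ := by rw [add_apply, add_sub_cancel_right]
    _ ≤ ‖(A + S) m‖ + ‖S m‖ := norm_sub_le _ _
    _ ≤ ‖(A + S) m‖ + ‖S‖ * ‖m‖ := by gcongr; exact S.le_opNorm m
  nlinarith [norm_nonneg U]

theorem ker_add_eq (h : IsMPBOf A U) {S : H₁ →L[ℂ] H₂}
    (hker : LinearMap.ker (A : H₁ →ₗ[ℂ] H₂) ≤ LinearMap.ker (S : H₁ →ₗ[ℂ] H₂))
    (hS : ‖S‖ * ‖U‖ < 1) :
    LinearMap.ker ((A + S : H₁ →L[ℂ] H₂) : H₁ →ₗ[ℂ] H₂) = LinearMap.ker (A : H₁ →ₗ[ℂ] H₂) := by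
  refine le_antisymm (fun x hx => ?_) fun x hx => ?_
  · have hx : (A + S) x = 0 := hx
    have hres : A (x - U (A x)) = 0 := h.proj_ker x
    have hSres : S (x - U (A x)) = 0 := hker (h.proj_ker x)
    have hm : (A + S) (U (A x)) = 0 := by
      have hsum : (A + S) (x - U (A x)) = 0 := by
        rw [add_apply, hres, hSres, add_zero]
      rwa [map_sub, hx, zero_sub, neg_eq_zero] at hsum
    have hbound := h.one_sub_mul_norm_le S (h.mem_carrier (A x))
    rw [hm, norm_zero, mul_zero, ← mul_zero (1 - ‖S‖ * ‖U‖)] at hbound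
    have hUAx : U (A x) = 0 := norm_le_zero_iff.mp (le_of_mul_le_mul_left hbound (by linarith))
    simpa [hUAx] using h.proj_ker x
  · have hSx : S x = 0 := hker hx
    have hAx : A x = 0 := hx
    show A x + S x = 0
    rw [hAx, hSx, add_zero]

end IsMPBOf

end MoorePenrose

theorem stmt10_general {H₁ H₂ : Type*} [NormedAddCommGroup H₁] [InnerProductSpace ℂ H₁] [CompleteSpace H₁]
    [NormedAddCommGroup H₂] [InnerProductSpace ℂ H₂] [CompleteSpace H₂]
    (T S : H₁ →L[ℂ] H₂)
    (Td : H₂ →L[ℂ] H₁) (hMP : IsMPBOf T Td)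
    (hker : LinearMap.ker (T : H₁ →ₗ[ℂ] H₂) ≤ LinearMap.ker (S : H₁ →ₗ[ℂ] H₂))
    (hnorm : ‖S‖ * ‖Td‖ < 1) :
    LinearMap.ker ((T + S : H₁ →L[ℂ] H₂) : H₁ →ₗ[ℂ] H₂) = LinearMap.ker (T : H₁ →ₗ[ℂ] H₂) ∧
      IsClosed (LinearMap.range ((T + S : H₁ →L[ℂ] H₂) : H₁ →ₗ[ℂ] H₂) : Set H₂) ∧
      ∃ U : H₂ →L[ℂ] H₁, IsMPBOf (T + S) U ∧ ‖U‖ ≤ ‖Td‖ / (1 - ‖S‖ * ‖Td‖) := by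
  have hgap : 0 < 1 - ‖S‖ * ‖Td‖ := sub_pos.mpr hnorm
  have hkerTS := hMP.ker_add_eq hker hnorm
  have hbound : ∀ m ∈ (LinearMap.ker ((T + S : H₁ →L[ℂ] H₂) : H₁ →ₗ[ℂ] H₂))ᗮ,
      ‖m‖ ≤ ‖Td‖ / (1 - ‖S‖ * ‖Td‖) * ‖(T + S) m‖ := by
    rw [hkerTS]
    intro m hm
    rw [div_mul_eq_mul_div, le_div_iff₀ hgap, mul_comm]
    exact hMP.one_sub_mul_norm_le S hm
  have hclosed := (T + S).isClosed_range_of_norm_le _ hbound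
  obtain ⟨U, hU⟩ := exists_isMPBOf_of_isClosed_range (T + S) hclosed
  exact ⟨hkerTS, hclosed, U, hU, hU.opNorm_le_of_norm_le (by positivity) hbound⟩

/-- Corollary 3.12 (Ding–Huang, Lemma 4.3): if `T` is bounded with closed range,
`N(T) ⊆ N(S)` and `‖S‖ ‖T†‖ < 1`, then `N(T + S) = N(T)`, `R(T + S)` is closed and
`‖(T + S)†‖ ≤ ‖T†‖/(1 − ‖S‖ ‖T†‖)`. -/
theorem stmt10 {H₁ H₂ : Type*} [NormedAddCommGroup H₁] [InnerProductSpace ℂ H₁] [CompleteSpace H₁]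
    [NormedAddCommGroup H₂] [InnerProductSpace ℂ H₂] [CompleteSpace H₂]
    (T S : H₁ →L[ℂ] H₂)
    (hran : IsClosed (LinearMap.range (T : H₁ →ₗ[ℂ] H₂) : Set H₂))
    (Td : H₂ →L[ℂ] H₁) (hMP : IsMPBOf T Td)
    (hker : LinearMap.ker (T : H₁ →ₗ[ℂ] H₂) ≤ LinearMap.ker (S : H₁ →ₗ[ℂ] H₂))
    (hnorm : ‖S‖ * ‖Td‖ < 1) :
    LinearMap.ker ((T + S : H₁ →L[ℂ] H₂) : H₁ →ₗ[ℂ] H₂) = LinearMap.ker (T : H₁ →ₗ[ℂ] H₂) ∧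
      IsClosed (LinearMap.range ((T + S : H₁ →L[ℂ] H₂) : H₁ →ₗ[ℂ] H₂) : Set H₂) ∧
      ∃ U : H₂ →L[ℂ] H₁, IsMPBOf (T + S) U ∧ ‖U‖ ≤ ‖Td‖ / (1 - ‖S‖ * ‖Td‖) :=
  stmt10_general T S Td hMP hker hnorm
end

section
/- Let H be a nonzero complex Hilbert space and T : H → H a bounded linear operator such that ‖Tx‖ ≤ λ₁‖x‖ + λ₂‖(I + T)x‖ for all x ∈ H, where λ₁ < 1 and λ₂ < 1. Then λ₁, λ₂ ∈ (−1, 1), I + T is bijective, and for all x, y ∈ H: ((1 − λ₁)/(1 + λ₂)) ‖x‖ ≤ ‖(I + T)x‖ ≤ ((1 + λ₁)/(1 − λ₂)) ‖x‖ and ((1 − λ₂)/(1 + λ₁)) ‖y‖ ≤ ‖(I + T)⁻¹ y‖ ≤ ((1 + λ₂)/(1 − λ₁)) ‖y‖. -/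
/-- Auxiliary: if `I + tT` is uniformly bounded below for `t ∈ [0,1]`, then `I + T`
is invertible (continuation method). -/
lemma aux13_unit {H : Type*} [NormedAddCommGroup H] [InnerProductSpace ℂ H] [CompleteSpace H]
    [Nontrivial H] (T : H →L[ℂ] H) (C : ℝ) (hC1 : 1 ≤ C)
    (key : ∀ t : ℝ, 0 ≤ t → t ≤ 1 → ∀ x : H, ‖x‖ ≤ C * ‖x + (t : ℂ) • T x‖) :
    IsUnit ((1 : H →L[ℂ] H) + T) := by
  have hC0 : (0:ℝ) ≤ C := by linarith
  have key' : ∀ t : ℝ, 0 ≤ t → t ≤ 1 → ∀ x : H,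
      ‖x‖ ≤ C * ‖((1 : H →L[ℂ] H) + (t : ℂ) • T) x‖ := by
    intro t ht0 ht1 x
    simpa [ContinuousLinearMap.add_apply, ContinuousLinearMap.one_apply] using key t ht0 ht1 x
  obtain ⟨r, hrdef⟩ : ∃ r : ℝ, r = (2 * C * (‖T‖ + 1))⁻¹ := ⟨_, rfl⟩
  have hTnn : (0:ℝ) ≤ ‖T‖ := norm_nonneg T
  have hden : (0:ℝ) < 2 * C * (‖T‖ + 1) := by nlinarith
  have hrpos : 0 < r := by rw [hrdef]; exact inv_pos.mpr hden
  have hrC : r * (C * ‖T‖) < 1 := by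
    rw [hrdef, inv_mul_lt_iff₀ hden]
    nlinarith
  have main : ∀ n : ℕ, ∀ t : ℝ, 0 ≤ t → t ≤ 1 → t ≤ n * r →
      IsUnit ((1 : H →L[ℂ] H) + (t : ℂ) • T) := by
    intro n
    induction n with
    | zero =>
      intro t ht0 ht1 htn
      have ht : t = 0 := le_antisymm (by simpa using htn) ht0
      simp [ht]
    | succ n ih =>
      intro t ht0 ht1 htn
      by_cases hcase : t ≤ n * r
      · exact ih t ht0 ht1 hcase
      push_neg at hcase
      obtain ⟨s, hsdef⟩ : ∃ s : ℝ, s = max (t - r) 0 := ⟨_, rfl⟩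
      have hs0 : 0 ≤ s := hsdef ▸ le_max_right _ _
      have hs1 : s ≤ 1 := by
        rw [hsdef]; exact max_le (by linarith) (by linarith)
      have hsn : s ≤ n * r := by
        rw [hsdef]
        apply max_le
        · push_cast at htn; linarith
        · positivity
      have hts1 : t - s ≤ r := by
        rw [hsdef]
        rcases le_total (t - r) 0 with h | h
        · rw [max_eq_right h]; linarith
        · rw [max_eq_left h]; linarith
      have hts0 : 0 ≤ t - s := by
        rw [hsdef]
        rcases le_total (t - r) 0 with h | h
        · rw [max_eq_right h]; linarith
        · rw [max_eq_left h]; linarith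
      obtain ⟨w, hw⟩ := ih s hs0 hs1 hsn
      have hwinv : ‖((w⁻¹ : (H →L[ℂ] H)ˣ) : H →L[ℂ] H)‖ ≤ C := by
        apply ContinuousLinearMap.opNorm_le_bound _ hC0
        intro y
        have happ : ((1 : H →L[ℂ] H) + (s : ℂ) • T) (((w⁻¹ : (H →L[ℂ] H)ˣ) : H →L[ℂ] H) y) = y := by
          have h := w.mul_inv
          have := congrArg (fun (f : H →L[ℂ] H) => f y) h
          simpa [ContinuousLinearMap.mul_apply, ContinuousLinearMap.one_apply, hw] using this
        calc ‖((w⁻¹ : (H →L[ℂ] H)ˣ) : H →L[ℂ] H) y‖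
            ≤ C * ‖((1 : H →L[ℂ] H) + (s : ℂ) • T) (((w⁻¹ : (H →L[ℂ] H)ˣ) : H →L[ℂ] H) y)‖ :=
              key' s hs0 hs1 _
          _ = C * ‖y‖ := by rw [happ]
      obtain ⟨z, hzdef⟩ : ∃ z : H →L[ℂ] H,
          z = -(((t - s : ℝ) : ℂ) • (((w⁻¹ : (H →L[ℂ] H)ˣ) : H →L[ℂ] H) * T)) := ⟨_, rfl⟩
      have hznorm : ‖z‖ < 1 := by
        have h1z : ‖z‖ = |t - s| * ‖((w⁻¹ : (H →L[ℂ] H)ˣ) : H →L[ℂ] H) * T‖ := by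
          rw [hzdef, norm_neg, norm_smul, Complex.norm_real, Real.norm_eq_abs]
        have h2z : ‖((w⁻¹ : (H →L[ℂ] H)ˣ) : H →L[ℂ] H) * T‖ ≤ C * ‖T‖ :=
          le_trans (norm_mul_le _ _) (mul_le_mul_of_nonneg_right hwinv (norm_nonneg _))
        have habs : |t - s| ≤ r := by rw [abs_of_nonneg hts0]; exact hts1
        calc ‖z‖ ≤ r * (C * ‖T‖) := by
              rw [h1z]
              exact mul_le_mul habs h2z (norm_nonneg _) (le_of_lt hrpos)
          _ < 1 := hrC
      have hdecomp : (1 : H →L[ℂ] H) + (t : ℂ) • T = (w : H →L[ℂ] H) * (1 - z) := by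
        rw [hzdef, sub_neg_eq_add, mul_add, mul_one, mul_smul_comm, ← mul_assoc, w.mul_inv,
          one_mul, hw]
        push_cast
        module
      rw [hdecomp]
      exact (w.isUnit).mul (Units.oneSub z hznorm).isUnit
  have h := main (⌈r⁻¹⌉₊) 1 zero_le_one le_rfl ?_
  · simpa using h
  · have hle := Nat.le_ceil r⁻¹
    calc (1:ℝ) = r⁻¹ * r := by field_simp
      _ ≤ (⌈r⁻¹⌉₊ : ℝ) * r := mul_le_mul_of_nonneg_right hle (le_of_lt hrpos)

set_option maxHeartbeats 1000000 in
/-- Lemma 4.3 (Ding, Lemma 2.2): if `T` is a bounded operator on a nonzero Hilbert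
space `H` with `‖T x‖ ≤ λ₁ ‖x‖ + λ₂ ‖(I + T) x‖` for all `x`, where `λ₁, λ₂ < 1`,
then `λ₁, λ₂ ∈ (−1, 1)`, `I + T` is bijective, and the stated two-sided norm bounds
hold for `I + T` and its (bounded) inverse. -/
theorem stmt13 {H : Type*} [NormedAddCommGroup H] [InnerProductSpace ℂ H] [CompleteSpace H]
    [Nontrivial H] (T : H →L[ℂ] H) (lam1 lam2 : ℝ) (h1 : lam1 < 1) (h2 : lam2 < 1)
    (hT : ∀ x : H, ‖T x‖ ≤ lam1 * ‖x‖ + lam2 * ‖(ContinuousLinearMap.id ℂ H + T) x‖) :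
    (-1 < lam1 ∧ lam1 < 1) ∧ (-1 < lam2 ∧ lam2 < 1) ∧
      Function.Bijective ⇑(ContinuousLinearMap.id ℂ H + T) ∧
      (∀ x : H, (1 - lam1) / (1 + lam2) * ‖x‖ ≤ ‖(ContinuousLinearMap.id ℂ H + T) x‖ ∧
        ‖(ContinuousLinearMap.id ℂ H + T) x‖ ≤ (1 + lam1) / (1 - lam2) * ‖x‖) ∧
      ∃ V : H →L[ℂ] H, V.comp (ContinuousLinearMap.id ℂ H + T) = ContinuousLinearMap.id ℂ H ∧
        (ContinuousLinearMap.id ℂ H + T).comp V = ContinuousLinearMap.id ℂ H ∧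
        ∀ y : H, (1 - lam2) / (1 + lam1) * ‖y‖ ≤ ‖V y‖ ∧
          ‖V y‖ ≤ (1 + lam2) / (1 - lam1) * ‖y‖ := by
  have hTx : ∀ x : H, ‖T x‖ ≤ lam1 * ‖x‖ + lam2 * ‖x + T x‖ := by
    intro x
    simpa [ContinuousLinearMap.add_apply] using hT x
  have hlow : ∀ x : H, (1 - lam1) * ‖x‖ ≤ (1 + lam2) * ‖x + T x‖ := by
    intro x
    have h := hTx x
    have htri : ‖x‖ ≤ ‖x + T x‖ + ‖T x‖ := by
      simpa using norm_sub_le (x + T x) (T x)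
    linarith
  have hup : ∀ x : H, (1 - lam2) * ‖x + T x‖ ≤ (1 + lam1) * ‖x‖ := by
    intro x
    have h := hTx x
    have htri : ‖x + T x‖ ≤ ‖x‖ + ‖T x‖ := norm_add_le x (T x)
    linarith
  obtain ⟨x₀, hx₀⟩ := exists_ne (0 : H)
  have hux₀ : 0 < ‖x₀‖ := norm_pos_iff.mpr hx₀
  have h2' : -1 < lam2 := by
    by_contra hc
    push_neg at hc
    have := hlow x₀
    nlinarith [norm_nonneg (x₀ + T x₀)]
  have hvx₀ : 0 < ‖x₀ + T x₀‖ := by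
    nlinarith [hlow x₀, norm_nonneg (x₀ + T x₀)]
  have h1' : -1 < lam1 := by
    nlinarith [hup x₀]
  -- uniform lower bound for I + t T, t ∈ [0,1]
  obtain ⟨P, hPdef⟩ : ∃ P : ℝ, P = max lam1 0 := ⟨_, rfl⟩
  obtain ⟨Q, hQdef⟩ : ∃ Q : ℝ, Q = max lam2 0 := ⟨_, rfl⟩
  obtain ⟨M, hMdef⟩ : ∃ M : ℝ, M = max P Q := ⟨_, rfl⟩
  have hP0 : 0 ≤ P := hPdef ▸ le_max_right _ _
  have hQ0 : 0 ≤ Q := hQdef ▸ le_max_right _ _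
  have hP1 : lam1 ≤ P := hPdef ▸ le_max_left _ _
  have hQ1 : lam2 ≤ Q := hQdef ▸ le_max_left _ _
  have hM1 : M < 1 := by
    rw [hMdef, hPdef, hQdef]
    exact max_lt (max_lt h1 one_pos) (max_lt h2 one_pos)
  have hPM : P ≤ M := hMdef ▸ le_max_left _ _
  have hQM : Q ≤ M := hMdef ▸ le_max_right _ _
  have hM0 : 0 ≤ M := le_trans hP0 hPM
  obtain ⟨C, hCdef⟩ : ∃ C : ℝ, C = 1 + (P + Q) / (1 - M) := ⟨_, rfl⟩
  have hC1 : 1 ≤ C := by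
    have h0 : 0 ≤ (P + Q) / (1 - M) := div_nonneg (by linarith) (by linarith)
    rw [hCdef]; linarith
  have key : ∀ t : ℝ, 0 ≤ t → t ≤ 1 → ∀ x : H, ‖x‖ ≤ C * ‖x + (t : ℂ) • T x‖ := by
    intro t ht0 ht1 x
    have hsm : ‖(t : ℂ) • T x‖ = t * ‖T x‖ := by
      rw [norm_smul, Complex.norm_real, Real.norm_eq_abs, abs_of_nonneg ht0]
    have hu : ‖x‖ ≤ ‖x + (t : ℂ) • T x‖ + t * ‖T x‖ := by
      calc ‖x‖ = ‖(x + (t : ℂ) • T x) - (t : ℂ) • T x‖ := by rw [add_sub_cancel_right]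
        _ ≤ ‖x + (t : ℂ) • T x‖ + ‖(t : ℂ) • T x‖ := norm_sub_le _ _
        _ = ‖x + (t : ℂ) • T x‖ + t * ‖T x‖ := by rw [hsm]
    have hv : ‖x + T x‖ ≤ ‖x + (t : ℂ) • T x‖ + (1 - t) * ‖T x‖ := by
      have hdec : x + T x = (x + (t : ℂ) • T x) + ((1 - t : ℝ) : ℂ) • T x := by
        push_cast
        module
      have h2n : ‖((1 - t : ℝ) : ℂ) • T x‖ = (1 - t) * ‖T x‖ := by
        rw [norm_smul, Complex.norm_real, Real.norm_eq_abs, abs_of_nonneg (by linarith)]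
      calc ‖x + T x‖ = ‖(x + (t : ℂ) • T x) + ((1 - t : ℝ) : ℂ) • T x‖ := by rw [← hdec]
        _ ≤ ‖x + (t : ℂ) • T x‖ + ‖((1 - t : ℝ) : ℂ) • T x‖ := norm_add_le _ _
        _ = ‖x + (t : ℂ) • T x‖ + (1 - t) * ‖T x‖ := by rw [h2n]
    have hw : ‖T x‖ ≤ P * ‖x‖ + Q * ‖x + T x‖ := by
      have h := hTx x
      have hp : lam1 * ‖x‖ ≤ P * ‖x‖ := mul_le_mul_of_nonneg_right hP1 (norm_nonneg x)
      have hq : lam2 * ‖x + T x‖ ≤ Q * ‖x + T x‖ :=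
        mul_le_mul_of_nonneg_right hQ1 (norm_nonneg _)
      linarith
    have hw0 : 0 ≤ ‖T x‖ := norm_nonneg _
    have hs0 : 0 ≤ ‖x + (t : ℂ) • T x‖ := norm_nonneg _
    have hws : (1 - M) * ‖T x‖ ≤ (P + Q) * ‖x + (t : ℂ) • T x‖ := by
      nlinarith [mul_le_mul_of_nonneg_right hPM ht0,
        mul_le_mul_of_nonneg_right hQM (by linarith : (0:ℝ) ≤ 1 - t),
        mul_le_mul_of_nonneg_left hu hP0, mul_le_mul_of_nonneg_left hv hQ0]
    have hwle : ‖T x‖ ≤ (P + Q) / (1 - M) * ‖x + (t : ℂ) • T x‖ := by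
      rw [div_mul_eq_mul_div, le_div_iff₀ (by linarith : (0:ℝ) < 1 - M)]
      nlinarith
    have htw : t * ‖T x‖ ≤ ‖T x‖ := by nlinarith
    calc ‖x‖ ≤ ‖x + (t : ℂ) • T x‖ + t * ‖T x‖ := hu
      _ ≤ ‖x + (t : ℂ) • T x‖ + (P + Q) / (1 - M) * ‖x + (t : ℂ) • T x‖ := by linarith
      _ = C * ‖x + (t : ℂ) • T x‖ := by rw [hCdef]; ring
  obtain ⟨w, hw⟩ := aux13_unit T C hC1 key
  obtain ⟨V, hVdef⟩ : ∃ V : H →L[ℂ] H, V = ((w⁻¹ : (H →L[ℂ] H)ˣ) : H →L[ℂ] H) := ⟨_, rfl⟩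
  have hid : (ContinuousLinearMap.id ℂ H + T) = (1 : H →L[ℂ] H) + T := by
    rw [ContinuousLinearMap.one_def]
  have hVS : V.comp (ContinuousLinearMap.id ℂ H + T) = ContinuousLinearMap.id ℂ H := by
    rw [hid, ← ContinuousLinearMap.one_def, ← ContinuousLinearMap.mul_def, ← hw, hVdef]
    exact w.inv_mul
  have hSV : (ContinuousLinearMap.id ℂ H + T).comp V = ContinuousLinearMap.id ℂ H := by
    rw [hid, ← ContinuousLinearMap.one_def, ← ContinuousLinearMap.mul_def, ← hw, hVdef]
    exact w.mul_inv
  have hVSapp : ∀ x : H, V ((ContinuousLinearMap.id ℂ H + T) x) = x := by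
    intro x
    have := congrArg (fun f : H →L[ℂ] H => f x) hVS
    simpa using this
  have hSVapp : ∀ y : H, (ContinuousLinearMap.id ℂ H + T) (V y) = y := by
    intro y
    have := congrArg (fun f : H →L[ℂ] H => f y) hSV
    simpa using this
  have hSapp : ∀ x : H, (ContinuousLinearMap.id ℂ H + T) x = x + T x := by
    intro x; simp
  refine ⟨⟨h1', h1⟩, ⟨h2', h2⟩, ?_, ?_, V, hVS, hSV, ?_⟩
  · exact Function.bijective_iff_has_inverse.mpr ⟨V, hVSapp, hSVapp⟩
  · intro x
    rw [hSapp]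
    constructor
    · rw [div_mul_eq_mul_div, div_le_iff₀ (by linarith : (0:ℝ) < 1 + lam2)]
      nlinarith [hlow x]
    · rw [div_mul_eq_mul_div, le_div_iff₀ (by linarith : (0:ℝ) < 1 - lam2)]
      nlinarith [hup x]
  · intro y
    have hy : y = V y + T (V y) := by
      have h := hSVapp y
      rw [hSapp] at h
      exact h.symm
    constructor
    · rw [div_mul_eq_mul_div, div_le_iff₀ (by linarith : (0:ℝ) < 1 + lam1)]
      have h := hup (V y)
      rw [← hy] at h
      nlinarith
    · rw [div_mul_eq_mul_div, le_div_iff₀ (by linarith : (0:ℝ) < 1 - lam1)]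
      have h := hlow (V y)
      rw [← hy] at h
      nlinarith
end

section
/- Let T be a closed densely defined linear operator from H₁ to H₂ and S : H₁ → H₂ a bounded linear operator such that ‖Sx‖ ≤ λ₁‖Tx‖ + λ₂‖Sx + Tx‖ for all x ∈ D(T), where λ₁ < 1 and λ₂ < 1. Then for x ∈ D(T) the following are equivalent: Tx = 0; Tx + Sx = 0; Tx = 0 and Sx = 0. In other words N(T) = N(T + S) = N(T) ∩ N(S). -/
/-- Theorem 5.1 (2): if `‖S x‖ ≤ λ₁ ‖T x‖ + λ₂ ‖S x + T x‖` on `D(T)` with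
`λ₁ < 1` and `λ₂ < 1`, then `N(T) = N(T + S) = N(T) ∩ N(S)`. -/
theorem stmt15 {H₁ H₂ : Type*} [NormedAddCommGroup H₁] [InnerProductSpace ℂ H₁] [CompleteSpace H₁]
    [NormedAddCommGroup H₂] [InnerProductSpace ℂ H₂] [CompleteSpace H₂]
    (T : H₁ →ₗ.[ℂ] H₂) (hTclosed : T.IsClosed) (hTdense : Dense (T.domain : Set H₁))
    (S : H₁ →L[ℂ] H₂) (lam1 lam2 : ℝ) (h1 : lam1 < 1) (h2 : lam2 < 1)
    (hST : ∀ x : T.domain, ‖S (x : H₁)‖ ≤ lam1 * ‖T x‖ + lam2 * ‖S (x : H₁) + T x‖) :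
    ∀ x : T.domain,
      (T x = 0 ↔ T x + S (x : H₁) = 0) ∧
        (T x + S (x : H₁) = 0 ↔ T x = 0 ∧ S (x : H₁) = 0) := by
  intro x
  have key1 : T x = 0 → S (x : H₁) = 0 := by
    intro hT
    have h := hST x
    rw [hT] at h
    simp only [norm_zero, mul_zero, zero_add, add_zero] at h
    have hnn : 0 ≤ ‖S (x : H₁)‖ := norm_nonneg _
    have h0 : ‖S (x : H₁)‖ = 0 := le_antisymm (by nlinarith) hnn
    exact norm_eq_zero.mp h0
  have key2 : T x + S (x : H₁) = 0 → T x = 0 := by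
    intro hsum
    have hS : S (x : H₁) = -T x := eq_neg_of_add_eq_zero_right hsum
    have h := hST x
    rw [hS] at h
    simp only [neg_add_cancel, norm_zero, mul_zero, add_zero, norm_neg] at h
    have := norm_nonneg (T x)
    have hT0 : ‖T x‖ = 0 := by nlinarith
    exact norm_eq_zero.mp hT0
  constructor
  · constructor
    · intro hT; rw [hT, key1 hT, add_zero]
    · intro hsum
      exact key2 hsum
  · constructor
    · intro hsum
      have hT := key2 hsum
      exact ⟨hT, key1 hT⟩
    · rintro ⟨hT, hS⟩; rw [hT, hS, add_zero]
end
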